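/- arXiv:2311.06464 — 4 statements merged into one kernel-verified Lean document; each statement's English description precedes it below -/
import Mathlib

section
/- For t = 0,1,2,3 let A_{a,t} ∈ ℝ^{m×n₁}, A_{b,t} ∈ ℝ^{m×n₂}, B_t ∈ ℝ^{m×d} be the components of reduced biquaternion matrices A_a, A_b, B, and let C_a = [A_{a,0}; A_{a,1}; A_{a,2}; A_{a,3}] ∈ ℝ^{4m×n₁}, C_b = [A_{b,0}; A_{b,1}; A_{b,2}; A_{b,3}] ∈ ℝ^{4m×n₂}, D = [B₀; B₁; B₂; B₃] ∈ ℝ^{4m×d} be their vertical stackings. Then a real matrix X = [X_a; X_b] ∈ ℝ^{(n₁+n₂)×d} is an RBMTLS solution — i.e., there exist real quadruples E_{b,t} ∈ ℝ^{m×n₂} and G_t ∈ ℝ^{m×d} (the components of reduced biquaternion perturbations Ê_b, Ĝ) attaining the minimum of (Σ_t ‖E_{b,t}‖_F² + Σ_t ‖G_t‖_F²)^{1/2} over all quadruples admitting a common real solution X′ = [X′_a; X′_b] of the four component equations A_{a,t} X′_a + (A_{b,t} + E_{b,t}) X′_b = B_t + G_t, and such that these four equations hold with X — if and only if X is a real MTLS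 solution, i.e., there exist Ẽ_b ∈ ℝ^{4m×n₂}, G̃ ∈ ℝ^{4m×d} attaining the minimum of ‖[Ẽ_b, G̃]‖_F subject to the existence of a real solution of C_a X′_a + (C_b + Ẽ_b) X′_b = D + G̃, and such that C_a X_a + (C_b + Ẽ_b) X_b = D + G̃. Moreover, the correspondence Ẽ_b = [E_{b,0}; E_{b,1}; E_{b,2}; E_{b,3}], G̃ = [G₀; G₁; G₂; G₃] preserves feasibility and the objective value: ‖[Ê_b, Ĝ]‖_F = ‖[Ẽ_b, G̃]‖_F. -/
open Matrix

/-- The Frobenius norm of a real matrix. -/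
noncomputable def frob {α β : Type*} [Fintype α] [Fintype β] (M : Matrix α β ℝ) : ℝ :=
  Real.sqrt (∑ i, ∑ j, M i j ^ 2)

/-- Vertical stacking `[M₀; M₁; M₂; M₃]` of the four real components of a reduced
biquaternion matrix. -/
def stack {m : ℕ} {β : Type*} (M : Fin 4 → Matrix (Fin m) β ℝ) :
    Matrix (Fin 4 × Fin m) β ℝ :=
  Matrix.of fun p j => M p.1 p.2 j

/-- The Frobenius norm `(Σ_t ‖E_t‖_F² + Σ_t ‖G_t‖_F²)^{1/2}` of the reduced biquaternion
matrix `[Ê_b, Ĝ]` with components `E_t`, `G_t`. -/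
noncomputable def objRB {m n₂ d : ℕ}
    (E : Fin 4 → Matrix (Fin m) (Fin n₂) ℝ) (G : Fin 4 → Matrix (Fin m) (Fin d) ℝ) : ℝ :=
  Real.sqrt ((∑ t, ∑ i, ∑ j, E t i j ^ 2) + (∑ t, ∑ i, ∑ j, G t i j ^ 2))

/-- Componentwise feasibility for the RBMTLS problem:
`A_{a,t} X_a + (A_{b,t} + E_t) X_b = B_t + G_t` for `t = 0,1,2,3`. -/
def feasRB {m n₁ n₂ d : ℕ}
    (Aa : Fin 4 → Matrix (Fin m) (Fin n₁) ℝ) (Ab : Fin 4 → Matrix (Fin m) (Fin n₂) ℝ)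
    (B : Fin 4 → Matrix (Fin m) (Fin d) ℝ)
    (E : Fin 4 → Matrix (Fin m) (Fin n₂) ℝ) (G : Fin 4 → Matrix (Fin m) (Fin d) ℝ)
    (Xa : Matrix (Fin n₁) (Fin d) ℝ) (Xb : Matrix (Fin n₂) (Fin d) ℝ) : Prop :=
  ∀ t, Aa t * Xa + (Ab t + E t) * Xb = B t + G t

/-- `X = [X_a; X_b]` is an RBMTLS solution: some feasible reduced biquaternion
perturbation `(E, G)` attains the minimum of the objective over all feasible data. -/
def isRBMTLSSol {m n₁ n₂ d : ℕ}
    (Aa : Fin 4 → Matrix (Fin m) (Fin n₁) ℝ) (Ab : Fin 4 → Matrix (Fin m) (Fin n₂) ℝ)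
    (B : Fin 4 → Matrix (Fin m) (Fin d) ℝ)
    (Xa : Matrix (Fin n₁) (Fin d) ℝ) (Xb : Matrix (Fin n₂) (Fin d) ℝ) : Prop :=
  ∃ E G, feasRB Aa Ab B E G Xa Xb ∧
    ∀ E' G' (Xa' : Matrix (Fin n₁) (Fin d) ℝ) (Xb' : Matrix (Fin n₂) (Fin d) ℝ),
      feasRB Aa Ab B E' G' Xa' Xb' → objRB E G ≤ objRB E' G'

/-- Feasibility for the real MTLS problem: `C_a X_a + (C_b + Ẽ_b) X_b = D + G̃`. -/
def feasMTLS {n₁ n₂ d : ℕ} {α : Type*} [Fintype α]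
    (Ca : Matrix α (Fin n₁) ℝ) (Cb : Matrix α (Fin n₂) ℝ) (D : Matrix α (Fin d) ℝ)
    (Et : Matrix α (Fin n₂) ℝ) (Gt : Matrix α (Fin d) ℝ)
    (Xa : Matrix (Fin n₁) (Fin d) ℝ) (Xb : Matrix (Fin n₂) (Fin d) ℝ) : Prop :=
  Ca * Xa + (Cb + Et) * Xb = D + Gt

/-- `X = [X_a; X_b]` is a real MTLS solution: some feasible real perturbation
`(Ẽ_b, G̃)` attains the minimum of `‖[Ẽ_b, G̃]‖_F` over all feasible data. -/
def isMTLSSol {n₁ n₂ d : ℕ} {α : Type*} [Fintype α]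
    (Ca : Matrix α (Fin n₁) ℝ) (Cb : Matrix α (Fin n₂) ℝ) (D : Matrix α (Fin d) ℝ)
    (Xa : Matrix (Fin n₁) (Fin d) ℝ) (Xb : Matrix (Fin n₂) (Fin d) ℝ) : Prop :=
  ∃ Et Gt, feasMTLS Ca Cb D Et Gt Xa Xb ∧
    ∀ Et' Gt' (Xa' : Matrix (Fin n₁) (Fin d) ℝ) (Xb' : Matrix (Fin n₂) (Fin d) ℝ),
      feasMTLS Ca Cb D Et' Gt' Xa' Xb' →
        frob (fromCols Et Gt) ≤ frob (fromCols Et' Gt')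

/-! Stacking `M ↦ [M₀; M₁; M₂; M₃]` is a bijection that turns the four component equations into
the single stacked equation and preserves the sum of squared entries, so the RBMTLS and MTLS
problems are the same minimisation problem with relabelled variables. -/

section Stack

variable {m : ℕ} {β : Type*}

lemma stack_surjective : Function.Surjective (stack : (Fin 4 → Matrix (Fin m) β ℝ) → _) :=
  fun M => ⟨fun t => of fun i j => M (t, i) j, rfl⟩

lemma stack_injective : Function.Injective (stack : (Fin 4 → Matrix (Fin m) β ℝ) → _) :=
  fun _ _ h => funext fun t => ext fun i j => congrFun (congrFun h (t, i)) j

lemma stack_add (M N : Fin 4 → Matrix (Fin m) β ℝ) :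
    stack M + stack N = stack (M + N) :=
  rfl

lemma stack_mul {γ : Type*} [Fintype β] (M : Fin 4 → Matrix (Fin m) β ℝ) (X : Matrix β γ ℝ) :
    stack M * X = stack (fun t => M t * X) := by
  ext p j
  simp [stack, mul_apply]

lemma sum_sq_stack [Fintype β] (M : Fin 4 → Matrix (Fin m) β ℝ) :
    ∑ p, ∑ j, stack M p j ^ 2 = ∑ t, ∑ i, ∑ j, M t i j ^ 2 :=
  Fintype.sum_prod_type _

end Stack

lemma frob_fromCols {α β γ : Type*} [Fintype α] [Fintype β] [Fintype γ]
    (M : Matrix α β ℝ) (N : Matrix α γ ℝ) :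
    frob (fromCols M N) = Real.sqrt ((∑ i, ∑ j, M i j ^ 2) + ∑ i, ∑ j, N i j ^ 2) := by
  simp [frob, fromCols, Fintype.sum_sum_type, Finset.sum_add_distrib]

lemma objRB_eq_frob_fromCols_stack {m n₂ d : ℕ}
    (E : Fin 4 → Matrix (Fin m) (Fin n₂) ℝ) (G : Fin 4 → Matrix (Fin m) (Fin d) ℝ) :
    objRB E G = frob (fromCols (stack E) (stack G)) := by
  rw [frob_fromCols, sum_sq_stack, sum_sq_stack, objRB]

lemma feasRB_iff_feasMTLS_stack {m n₁ n₂ d : ℕ}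
    (Aa : Fin 4 → Matrix (Fin m) (Fin n₁) ℝ) (Ab : Fin 4 → Matrix (Fin m) (Fin n₂) ℝ)
    (B : Fin 4 → Matrix (Fin m) (Fin d) ℝ)
    (E : Fin 4 → Matrix (Fin m) (Fin n₂) ℝ) (G : Fin 4 → Matrix (Fin m) (Fin d) ℝ)
    (Xa : Matrix (Fin n₁) (Fin d) ℝ) (Xb : Matrix (Fin n₂) (Fin d) ℝ) :
    feasRB Aa Ab B E G Xa Xb ↔
      feasMTLS (stack Aa) (stack Ab) (stack B) (stack E) (stack G) Xa Xb := by
  rw [feasMTLS, stack_add, stack_mul, stack_mul, stack_add, stack_add, stack_injective.eq_iff,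
    funext_iff]
  rfl

/-- a real matrix `X = [X_a; X_b]` is an RBMTLS solution if and only if it
is a real MTLS solution for the stacked data `C_a, C_b, D`; moreover the correspondence
`Ẽ_b = [E₀; E₁; E₂; E₃]`, `G̃ = [G₀; G₁; G₂; G₃]` preserves the objective value
(`‖[Ê_b, Ĝ]‖_F = ‖[Ẽ_b, G̃]‖_F`) and feasibility. -/
theorem rbmtls_iff_mtls {m n₁ n₂ d : ℕ}
    (Aa : Fin 4 → Matrix (Fin m) (Fin n₁) ℝ) (Ab : Fin 4 → Matrix (Fin m) (Fin n₂) ℝ)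
    (B : Fin 4 → Matrix (Fin m) (Fin d) ℝ)
    (Xa : Matrix (Fin n₁) (Fin d) ℝ) (Xb : Matrix (Fin n₂) (Fin d) ℝ) :
    (isRBMTLSSol Aa Ab B Xa Xb ↔ isMTLSSol (stack Aa) (stack Ab) (stack B) Xa Xb) ∧
    (∀ (E : Fin 4 → Matrix (Fin m) (Fin n₂) ℝ) (G : Fin 4 → Matrix (Fin m) (Fin d) ℝ),
      objRB E G = frob (fromCols (stack E) (stack G))) ∧
    (∀ (E : Fin 4 → Matrix (Fin m) (Fin n₂) ℝ) (G : Fin 4 → Matrix (Fin m) (Fin d) ℝ)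
      (Xa' : Matrix (Fin n₁) (Fin d) ℝ) (Xb' : Matrix (Fin n₂) (Fin d) ℝ),
      feasRB Aa Ab B E G Xa' Xb' ↔
        feasMTLS (stack Aa) (stack Ab) (stack B) (stack E) (stack G) Xa' Xb') := by
  refine ⟨?_, objRB_eq_frob_fromCols_stack, feasRB_iff_feasMTLS_stack Aa Ab B⟩
  simp only [isRBMTLSSol, isMTLSSol, feasRB_iff_feasMTLS_stack, objRB_eq_frob_fromCols_stack,
    stack_surjective.exists, stack_surjective.forall]
end

section
/- Under the hypotheses of the MTLS theorem — C_a ∈ ℝ^{M×n₁}, C_b ∈ ℝ^{M×n₂}, D ∈ ℝ^{M×d} with M ≥ n₁+n₂+d; Q orthogonal with Qᵀ[C_a, C_b, D] = [[R₁₁, R₁₂, R₁d], [0, R₂₂, R₂d]] and R₁₁ invertible; [R₂₂, R₂d] = UΣVᵀ a singular value decomposition with singular values σ₁ ≥ … ≥ σ_{n₂+d} > 0, σ_{n₂} > σ_{n₂+1}, and V₂₂ ∈ ℝ^{d×d} invertible — the minimum of ‖[Ẽ_b, G̃]‖_F over all (X, Ẽ_b, G̃) satisfying C_a X_a + (C_b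 + Ẽ_b) X_b = D + G̃ equals (σ_{n₂+1}² + σ_{n₂+2}² + … + σ_{n₂+d}²)^{1/2}. -/
/-!
Multiplying the constraint by `Qᵀ` splits it into two block rows. The top one,
`R₁₁ X_a + (R₁₂ + E₁) X_b = R₁d + G₁`, can always be met by the choice of `X_a` because `R₁₁` is
invertible. The bottom one says `([R₂₂, R₂d] + Δ) [X_b; -I] = 0` with `Δ = [E₂, G₂]`, and
`‖Δ‖_F ≤ ‖[Ẽ_b, G̃]‖_F` because `Q` is orthogonal. What remains is a total least squares problem
for `A = [R₂₂, R₂d] = U Σ Vᵀ`. Let `P` be the orthogonal projector onto the `d`-dimensional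
column space of `N = [X_b; -I]`. Since `(A + Δ) P = 0`,
`‖Δ‖² ≥ ‖Δ P‖² = ‖A P‖² = ∑ⱼ σⱼ² pⱼ` with `pⱼ = (Vᵀ P V)ⱼⱼ ∈ [0, 1]` and `∑ⱼ pⱼ = d`, which is
at least `σ_{n₂+1}² + ⋯ + σ_{n₂+d}²`. Deleting the last `d` singular values attains the bound:
`V [0; I]` spans the null space of the truncated matrix, and since `V₂₂` is invertible it can be
normalised to the form `[X_b; -I]`.
-/

open Matrix

/-- `X = [X_a; X_b]` is a real MTLS solution for data `C_a, C_b, D`: there exist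
perturbations `Ẽ_b, G̃` with `C_a X_a + (C_b + Ẽ_b) X_b = D + G̃` attaining the minimum
of `‖[Ẽ_b, G̃]‖_F` among all feasible triples `(X', Ẽ_b', G̃')`. -/
def IsMTLSSol {M n₁ n₂ d : ℕ}
    (Ca : Matrix (Fin M) (Fin n₁) ℝ) (Cb : Matrix (Fin M) (Fin n₂) ℝ)
    (D : Matrix (Fin M) (Fin d) ℝ) (X : Matrix (Fin n₁ ⊕ Fin n₂) (Fin d) ℝ) : Prop :=
  ∃ (E : Matrix (Fin M) (Fin n₂) ℝ) (G : Matrix (Fin M) (Fin d) ℝ),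
    fromCols Ca (Cb + E) * X = D + G ∧
    ∀ (E' : Matrix (Fin M) (Fin n₂) ℝ) (G' : Matrix (Fin M) (Fin d) ℝ)
      (X' : Matrix (Fin n₁ ⊕ Fin n₂) (Fin d) ℝ),
      fromCols Ca (Cb + E') * X' = D + G' →
        frob (fromCols E G) ≤ frob (fromCols E' G')

theorem sum_inr_le_sum_mul {ι κ : Type*} [Fintype ι] [Fintype κ] {f p : ι ⊕ κ → ℝ} {c : ℝ}
    (hf₁ : ∀ i, c ≤ f (Sum.inl i)) (hf₂ : ∀ k, f (Sum.inr k) ≤ c) (hp₀ : ∀ j, 0 ≤ p j)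
    (hp₁ : ∀ j, p j ≤ 1) (hp : ∑ j, p j = Fintype.card κ) :
    ∑ k, f (Sum.inr k) ≤ ∑ j, f j * p j := by
  -- on the `κ`-block this is `(f k - c) (p k - 1) ≥ 0`
  have hterm : ∀ j, c * p j + Sum.elim (fun _ => 0) (fun k => f (Sum.inr k) - c) j ≤ f j * p j := by
    rintro (i | k)
    · simpa using mul_le_mul_of_nonneg_right (hf₁ i) (hp₀ (Sum.inl i))
    · simp only [Sum.elim_inr]
      nlinarith [hp₁ (Sum.inr k), hf₂ k]
  calc ∑ k, f (Sum.inr k)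
      = ∑ j, (c * p j + Sum.elim (fun _ => 0) (fun k => f (Sum.inr k) - c) j) := by
        rw [Finset.sum_add_distrib, ← Finset.mul_sum, hp, Fintype.sum_sum_type]
        simp [Finset.sum_sub_distrib]
        ring
    _ ≤ ∑ j, f j * p j := Finset.sum_le_sum fun j _ => hterm j

namespace Matrix

section Frobenius

variable {l m n p : Type*} [Fintype l] [Fintype m] [Fintype n] [Fintype p]

noncomputable def frobSq (A : Matrix m n ℝ) : ℝ :=
  ∑ i, ∑ j, A i j ^ 2

theorem frob_eq_sqrt_frobSq (A : Matrix m n ℝ) : frob A = √(frobSq A) := rfl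

@[simp]
theorem frobSq_zero : frobSq (0 : Matrix m n ℝ) = 0 := by
  simp [frobSq]

@[simp]
theorem frobSq_neg (A : Matrix m n ℝ) : frobSq (-A) = frobSq A := by
  simp [frobSq]

theorem frobSq_nonneg (A : Matrix m n ℝ) : 0 ≤ frobSq A := by
  unfold frobSq
  positivity

theorem frobSq_eq_trace (A : Matrix m n ℝ) : frobSq A = trace (Aᵀ * A) := by
  simp only [frobSq, trace, diag_apply, mul_apply, transpose_apply, sq]
  exact Finset.sum_comm

@[simp]
theorem frobSq_fromCols (A : Matrix m n ℝ) (B : Matrix m p ℝ) :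
    frobSq (fromCols A B) = frobSq A + frobSq B := by
  simp [frobSq, Fintype.sum_sum_type, Finset.sum_add_distrib]

@[simp]
theorem frobSq_fromRows (A : Matrix m n ℝ) (B : Matrix p n ℝ) :
    frobSq (fromRows A B) = frobSq A + frobSq B := by
  simp [frobSq, Fintype.sum_sum_type]

theorem frobSq_orthogonal_mul [DecidableEq m] {Q : Matrix l m ℝ} (hQ : Qᵀ * Q = 1)
    (A : Matrix m n ℝ) :
    frobSq (Q * A) = frobSq A := by
  rw [frobSq_eq_trace, frobSq_eq_trace, transpose_mul, Matrix.mul_assoc, ← Matrix.mul_assoc Qᵀ,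
    hQ, Matrix.one_mul]

theorem frobSq_mul_orthogonal [DecidableEq n] {V : Matrix n p ℝ} (hV : V * Vᵀ = 1)
    (A : Matrix m n ℝ) :
    frobSq (A * V) = frobSq A := by
  rw [frobSq_eq_trace, frobSq_eq_trace, transpose_mul, Matrix.mul_assoc, trace_mul_comm,
    Matrix.mul_assoc, Matrix.mul_assoc, hV, Matrix.mul_one, trace_mul_comm]

end Frobenius

section Projection

variable {m n : Type*} [Fintype m] [Fintype n] {P : Matrix n n ℝ}

theorem frobSq_mul_proj (hPt : Pᵀ = P) (hPP : P * P = P) (A : Matrix m n ℝ) :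
    frobSq (A * P) = trace (Aᵀ * A * P) := by
  rw [frobSq_eq_trace, transpose_mul, hPt, Matrix.mul_assoc, trace_mul_comm, Matrix.mul_assoc,
    Matrix.mul_assoc, hPP, Matrix.mul_assoc]

theorem frobSq_mul_proj_le [DecidableEq n] (hPt : Pᵀ = P) (hPP : P * P = P) (A : Matrix m n ℝ) :
    frobSq (A * P) ≤ frobSq A := by
  have hQt : (1 - P)ᵀ = 1 - P := by rw [transpose_sub, transpose_one, hPt]
  have hQQ : (1 - P) * (1 - P) = 1 - P := by
    simp [Matrix.mul_sub, Matrix.sub_mul, hPP]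
  have hsplit : frobSq A = frobSq (A * P) + frobSq (A * (1 - P)) := by
    rw [frobSq_mul_proj hPt hPP, frobSq_mul_proj hQt hQQ, Matrix.mul_sub, Matrix.mul_one,
      trace_sub, frobSq_eq_trace]
    ring
  linarith [frobSq_nonneg (A * (1 - P))]

theorem proj_diag_mem_Icc (hPt : Pᵀ = P) (hPP : P * P = P) (j : n) : P j j ∈ Set.Icc 0 1 := by
  have hrow : P j j = ∑ k, P j k ^ 2 := by
    conv_lhs => rw [← hPP]
    refine Finset.sum_congr rfl fun k _ => ?_
    change P j k * P k j = _
    rw [sq, show P k j = P j k from congrFun (congrFun hPt j) k]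
  have hsq : P j j ^ 2 ≤ P j j :=
    hrow ▸ Finset.single_le_sum (fun k _ => sq_nonneg (P j k)) (Finset.mem_univ j)
  have hnonneg : 0 ≤ P j j := hrow ▸ by positivity
  exact ⟨hnonneg, by nlinarith⟩

end Projection

section ColumnProjection

variable {m n p : Type*} [Fintype n] [Fintype p] [DecidableEq p]

noncomputable def colProj (N : Matrix n p ℝ) : Matrix n n ℝ :=
  N * (Nᵀ * N)⁻¹ * Nᵀ

theorem colProj_transpose (N : Matrix n p ℝ) : (colProj N)ᵀ = colProj N := by
  simp only [colProj, transpose_mul, transpose_transpose, transpose_nonsing_inv, Matrix.mul_assoc]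

theorem colProj_mul_self {N : Matrix n p ℝ} (hN : IsUnit (Nᵀ * N).det) :
    colProj N * colProj N = colProj N := by
  simp only [colProj, Matrix.mul_assoc]
  rw [← Matrix.mul_assoc Nᵀ N, nonsing_inv_mul_cancel_left _ _ hN]

theorem trace_colProj {N : Matrix n p ℝ} (hN : IsUnit (Nᵀ * N).det) :
    trace (colProj N) = Fintype.card p := by
  rw [colProj, trace_mul_cycle, mul_nonsing_inv _ hN, trace_one]

theorem mul_colProj_eq_zero {B : Matrix m n ℝ} {N : Matrix n p ℝ} (h : B * N = 0) :
    B * colProj N = 0 := by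
  rw [colProj, ← Matrix.mul_assoc, ← Matrix.mul_assoc, h, Matrix.zero_mul, Matrix.zero_mul]

end ColumnProjection

theorem fromRows_add_fromRows {m₁ m₂ n R : Type*} [Add R] (A₁ B₁ : Matrix m₁ n R)
    (A₂ B₂ : Matrix m₂ n R) :
    fromRows A₁ A₂ + fromRows B₁ B₂ = fromRows (A₁ + B₁) (A₂ + B₂) := by
  ext (i | i) j <;> rfl

theorem fromCols_add_fromCols {m n₁ n₂ R : Type*} [Add R] (A₁ B₁ : Matrix m n₁ R)
    (A₂ B₂ : Matrix m n₂ R) :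
    fromCols A₁ A₂ + fromCols B₁ B₂ = fromCols (A₁ + B₁) (A₂ + B₂) := by
  ext i (j | j) <;> rfl

theorem fromCols_mul_fromRows_neg_one_eq_zero_iff {m ι κ R : Type*} [Fintype ι] [Fintype κ]
    [DecidableEq κ] [Ring R] (B₁ : Matrix m ι R) (B₂ : Matrix m κ R) (Y : Matrix ι κ R) :
    fromCols B₁ B₂ * fromRows Y (-1 : Matrix κ κ R) = 0 ↔ B₁ * Y = B₂ := by
  rw [fromCols_mul_fromRows, Matrix.mul_neg, Matrix.mul_one, ← sub_eq_add_neg, sub_eq_zero]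

theorem isUnit_det_gram_fromRows_neg_one {ι κ : Type*} [Fintype ι] [Fintype κ] [DecidableEq κ]
    (Y : Matrix ι κ ℝ) :
    IsUnit ((fromRows Y (-1 : Matrix κ κ ℝ))ᵀ * fromRows Y (-1 : Matrix κ κ ℝ)).det := by
  have hgram : (fromRows Y (-1 : Matrix κ κ ℝ))ᵀ * fromRows Y (-1 : Matrix κ κ ℝ) = Yᵀ * Y + 1 := by
    rw [transpose_fromRows, fromCols_mul_fromRows]
    simp
  have hpsd : (Yᵀ * Y).PosSemidef := by
    simpa only [conjTranspose_eq_transpose_of_trivial] using posSemidef_conjTranspose_mul_self Y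
  rw [hgram, ← isUnit_iff_isUnit_det]
  exact (PosDef.posSemidef_add hpsd PosDef.one).isUnit

section TotalLeastSquares

variable {m ι κ : Type*} [Fintype m] [Fintype ι] [Fintype κ] [DecidableEq ι] [DecidableEq κ]

/-- The Eckart–Young–Mirsky bound, in coordinates where `Bᵀ B` is diagonal. -/
theorem sum_inr_le_frobSq_of_mul_eq_zero {B Δ : Matrix m (ι ⊕ κ) ℝ} {N : Matrix (ι ⊕ κ) κ ℝ}
    {f : ι ⊕ κ → ℝ} {c : ℝ} (hB : Bᵀ * B = diagonal f) (hf₁ : ∀ i, c ≤ f (Sum.inl i))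
    (hf₂ : ∀ k, f (Sum.inr k) ≤ c) (hN : IsUnit (Nᵀ * N).det) (h : (B + Δ) * N = 0) :
    ∑ k, f (Sum.inr k) ≤ frobSq Δ := by
  set P := colProj N
  have hPt : Pᵀ = P := colProj_transpose N
  have hPP : P * P = P := colProj_mul_self hN
  have hBP : B * P = -(Δ * P) :=
    eq_neg_of_add_eq_zero_left (by rw [← Matrix.add_mul, mul_colProj_eq_zero h])
  calc ∑ k, f (Sum.inr k)
      ≤ ∑ j, f j * P j j :=
        sum_inr_le_sum_mul hf₁ hf₂ (fun j => (proj_diag_mem_Icc hPt hPP j).1)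
          (fun j => (proj_diag_mem_Icc hPt hPP j).2) (trace_colProj hN)
    _ = trace (Bᵀ * B * P) := by simp [hB, trace, diagonal_mul]
    _ = frobSq (Δ * P) := by rw [← frobSq_mul_proj hPt hPP, hBP, frobSq_neg]
    _ ≤ frobSq Δ := frobSq_mul_proj_le hPt hPP Δ

theorem sum_inr_le_frobSq_of_svd {A B Δ : Matrix m (ι ⊕ κ) ℝ} {V : Matrix (ι ⊕ κ) (ι ⊕ κ) ℝ}
    {f : ι ⊕ κ → ℝ} {c : ℝ} (hV : V * Vᵀ = 1) (hA : A = B * Vᵀ) (hB : Bᵀ * B = diagonal f)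
    (hf₁ : ∀ i, c ≤ f (Sum.inl i)) (hf₂ : ∀ k, f (Sum.inr k) ≤ c) {Y : Matrix ι κ ℝ}
    (h : (A + Δ) * fromRows Y (-1 : Matrix κ κ ℝ) = 0) :
    ∑ k, f (Sum.inr k) ≤ frobSq Δ := by
  set N := fromRows Y (-1 : Matrix κ κ ℝ)
  have hgram : (Vᵀ * N)ᵀ * (Vᵀ * N) = Nᵀ * N := by
    rw [transpose_mul, transpose_transpose, Matrix.mul_assoc, ← Matrix.mul_assoc V, hV,
      Matrix.one_mul]
  have hrot : (B + Δ * V) * (Vᵀ * N) = 0 := by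
    rw [← h, hA, Matrix.add_mul, Matrix.add_mul]
    simp only [Matrix.mul_assoc, ← Matrix.mul_assoc V, hV, Matrix.one_mul]
  rw [← frobSq_mul_orthogonal hV Δ]
  exact sum_inr_le_frobSq_of_mul_eq_zero hB hf₁ hf₂ (hgram ▸ isUnit_det_gram_fromRows_neg_one Y)
    hrot

theorem exists_frobSq_eq_of_svd {A B : Matrix m (ι ⊕ κ) ℝ} {V₁₁ : Matrix ι ι ℝ}
    {V₁₂ : Matrix ι κ ℝ} {V₂₁ : Matrix κ ι ℝ} {V₂₂ : Matrix κ κ ℝ} {f : ι ⊕ κ → ℝ}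
    (hV : (fromBlocks V₁₁ V₁₂ V₂₁ V₂₂)ᵀ * fromBlocks V₁₁ V₁₂ V₂₁ V₂₂ = 1)
    (hA : A = B * (fromBlocks V₁₁ V₁₂ V₂₁ V₂₂)ᵀ) (hB : Bᵀ * B = diagonal f)
    (hV₂₂ : IsUnit V₂₂.det) :
    ∃ (Y : Matrix ι κ ℝ) (Δ : Matrix m (ι ⊕ κ) ℝ),
      (A + Δ) * fromRows Y (-1 : Matrix κ κ ℝ) = 0 ∧ frobSq Δ = ∑ k, f (Sum.inr k) := by
  set V := fromBlocks V₁₁ V₁₂ V₂₁ V₂₂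
  set Btrunc : Matrix m (ι ⊕ κ) ℝ := fromCols B.toCols₁ 0
  set J : Matrix (ι ⊕ κ) κ ℝ := fromRows 0 1
  refine ⟨-(V₁₂ * V₂₂⁻¹), Btrunc * Vᵀ - A, ?_, ?_⟩
  · have hnull : fromRows (-(V₁₂ * V₂₂⁻¹)) (-1 : Matrix κ κ ℝ) = -(V * J * V₂₂⁻¹) := by
      rw [fromBlocks_mul_fromRows]
      simp [fromRows_mul, mul_nonsing_inv _ hV₂₂]
    rw [add_sub_cancel, hnull, Matrix.mul_neg, neg_eq_zero]
    calc Btrunc * Vᵀ * (V * J * V₂₂⁻¹) = Btrunc * (Vᵀ * V) * J * V₂₂⁻¹ := by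
          simp only [Matrix.mul_assoc]
      _ = 0 := by simp [hV, Btrunc, J, fromCols_mul_fromRows]
  · have hVt : Vᵀ * Vᵀᵀ = 1 := by rwa [transpose_transpose]
    have hBtrunc : Btrunc - B = fromCols 0 (-B.toCols₂) := by
      ext i (j | j) <;> simp [Btrunc]
    rw [hA, ← Matrix.sub_mul, frobSq_mul_orthogonal hVt, hBtrunc, frobSq_fromCols,
      frobSq_zero, zero_add, frobSq_neg, frobSq_eq_trace]
    calc trace (B.toCols₂ᵀ * B.toCols₂) = ∑ k, (Bᵀ * B) (Sum.inr k) (Sum.inr k) := by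
          simp [trace, mul_apply]
      _ = ∑ k, f (Sum.inr k) := by simp [hB]

end TotalLeastSquares

theorem transpose_mul_self_of_ite {m : ℕ} {κ : Type*} [Fintype κ] [DecidableEq κ] {e : κ → ℕ}
    (he : Function.Injective e) (hem : ∀ j, e j < m) (s : κ → ℝ) :
    (of fun (i : Fin m) j => if (i : ℕ) = e j then s j else 0)ᵀ *
        (of fun (i : Fin m) j => if (i : ℕ) = e j then s j else 0) =
      diagonal fun j => s j ^ 2 := by
  ext j l
  rw [mul_apply, Finset.sum_eq_single ⟨e j, hem j⟩]
  · by_cases hjl : j = l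
    · simp [hjl, sq]
    · simp [he.eq_iff, hjl]
  · intro i _ hi
    have hij : (i : ℕ) ≠ e j := fun h => hi (Fin.ext h)
    simp [hij]
  · simp

theorem mul_eq_fromRows_of_mul_eq_fromBlocks {m a b k r R : Type*} [Fintype m] [Semiring R]
    {P : Matrix (a ⊕ r) m R} {Ca : Matrix m a R} {Cb : Matrix m b R} {D : Matrix m k R}
    {R₁₁ : Matrix a a R} {R₁₂ : Matrix a b R} {R₁d : Matrix a k R} {R₂₂ : Matrix r b R}
    {R₂d : Matrix r k R}
    (h : P * fromCols (fromCols Ca Cb) D =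
      fromBlocks (fromCols R₁₁ R₁₂) R₁d (fromCols 0 R₂₂) R₂d) :
    P * Ca = fromRows R₁₁ 0 ∧ P * Cb = fromRows R₁₂ R₂₂ ∧ P * D = fromRows R₁d R₂d := by
  rw [mul_fromCols, mul_fromCols, ← fromCols_fromRows_eq_fromBlocks] at h
  obtain ⟨hC, hD⟩ := fromCols_inj h
  rw [fromRows_fromCols_eq_fromBlocks, ← fromCols_fromRows_eq_fromBlocks] at hC
  obtain ⟨hCa, hCb⟩ := fromCols_inj hC
  exact ⟨hCa, hCb, hD⟩

section QRReduction

variable {m a b k r : Type*} [Fintype m] [Fintype a] [Fintype b] [Fintype k] [Fintype r]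
  [DecidableEq k]
  {Ca : Matrix m a ℝ} {Cb : Matrix m b ℝ} {D : Matrix m k ℝ} {Q : Matrix m (a ⊕ r) ℝ}
  {R₁₁ : Matrix a a ℝ} {R₁₂ : Matrix a b ℝ} {R₁d : Matrix a k ℝ} {R₂₂ : Matrix r b ℝ}
  {R₂d : Matrix r k ℝ}

theorem exists_bottom_of_feasible [DecidableEq m] (hQ' : Q * Qᵀ = 1)
    (hCa : Qᵀ * Ca = fromRows R₁₁ 0) (hCb : Qᵀ * Cb = fromRows R₁₂ R₂₂)
    (hD : Qᵀ * D = fromRows R₁d R₂d) {X : Matrix (a ⊕ b) k ℝ} {E : Matrix m b ℝ}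
    {G : Matrix m k ℝ} (h : fromCols Ca (Cb + E) * X = D + G) :
    ∃ Δ : Matrix r (b ⊕ k) ℝ,
      (fromCols R₂₂ R₂d + Δ) * fromRows X.toRows₂ (-1 : Matrix k k ℝ) = 0 ∧
        frobSq Δ ≤ frobSq (fromCols E G) := by
  obtain ⟨E₁, E₂, hE⟩ : ∃ E₁ E₂, Qᵀ * E = fromRows E₁ E₂ := ⟨_, _, (fromRows_toRows _).symm⟩
  obtain ⟨G₁, G₂, hG⟩ : ∃ G₁ G₂, Qᵀ * G = fromRows G₁ G₂ := ⟨_, _, (fromRows_toRows _).symm⟩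
  have hrows := congrArg (Qᵀ * ·) h
  rw [← fromRows_toRows X] at hrows
  simp only [fromCols_mul_fromRows, Matrix.mul_add, Matrix.add_mul, ← Matrix.mul_assoc, hCa, hCb,
    hD, hE, hG, fromRows_mul, fromRows_add_fromRows] at hrows
  obtain ⟨-, hbot⟩ := fromRows_inj hrows
  refine ⟨fromCols E₂ G₂, ?_, ?_⟩
  · rw [fromCols_add_fromCols, fromCols_mul_fromRows_neg_one_eq_zero_iff, ← hbot]
    simp [Matrix.add_mul]
  · have hQt : Qᵀᵀ * Qᵀ = 1 := by rwa [transpose_transpose]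
    rw [← frobSq_orthogonal_mul hQt, mul_fromCols, hE, hG]
    simp only [frobSq_fromCols, frobSq_fromRows]
    linarith [frobSq_nonneg E₁, frobSq_nonneg G₁]

theorem exists_feasible_of_bottom [DecidableEq a] [DecidableEq r] [DecidableEq m]
    (hQ : Qᵀ * Q = 1) (hQ' : Q * Qᵀ = 1) (hR₁₁ : IsUnit R₁₁.det)
    (hCa : Qᵀ * Ca = fromRows R₁₁ 0) (hCb : Qᵀ * Cb = fromRows R₁₂ R₂₂)
    (hD : Qᵀ * D = fromRows R₁d R₂d) {Y : Matrix b k ℝ} {Δ : Matrix r (b ⊕ k) ℝ}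
    (h : (fromCols R₂₂ R₂d + Δ) * fromRows Y (-1 : Matrix k k ℝ) = 0) :
    ∃ (X : Matrix (a ⊕ b) k ℝ) (E : Matrix m b ℝ) (G : Matrix m k ℝ),
      fromCols Ca (Cb + E) * X = D + G ∧ frobSq (fromCols E G) = frobSq Δ := by
  obtain ⟨E₂, G₂, rfl⟩ : ∃ E₂ G₂, Δ = fromCols E₂ G₂ := ⟨_, _, (fromCols_toCols Δ).symm⟩
  rw [fromCols_add_fromCols, fromCols_mul_fromRows_neg_one_eq_zero_iff] at h
  refine ⟨fromRows (R₁₁⁻¹ * (R₁d - R₁₂ * Y)) Y, Q * fromRows (0 : Matrix a b ℝ) E₂,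
    Q * fromRows (0 : Matrix a k ℝ) G₂, ?_, ?_⟩
  · suffices hrows : Qᵀ * (fromCols Ca (Cb + Q * fromRows (0 : Matrix a b ℝ) E₂) *
        fromRows (R₁₁⁻¹ * (R₁d - R₁₂ * Y)) Y) = Qᵀ * (D + Q * fromRows (0 : Matrix a k ℝ) G₂) by
      simpa only [← Matrix.mul_assoc, hQ', Matrix.one_mul] using congrArg (Q * ·) hrows
    simp only [fromCols_mul_fromRows, Matrix.mul_add, Matrix.add_mul, ← Matrix.mul_assoc, hQ,
      Matrix.one_mul, hCa, hCb, hD, fromRows_mul, fromRows_add_fromRows, Matrix.zero_mul,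
      zero_add, add_zero]
    rw [mul_nonsing_inv _ hR₁₁, Matrix.one_mul, sub_add_cancel, ← Matrix.add_mul, h]
  · rw [← mul_fromCols, frobSq_orthogonal_mul hQ]
    simp only [frobSq_fromCols, frobSq_fromRows, frobSq_zero, zero_add]

end QRReduction

end Matrix

theorem sum_filter_le_val_eq_sum_inr {M : Type*} [AddCommMonoid M] {n d : ℕ}
    (g : Fin (n + d) → M) :
    ∑ i ∈ Finset.univ.filter (fun i : Fin (n + d) => n ≤ (i : ℕ)), g i =
      ∑ k : Fin d, g (finSumFinEquiv (Sum.inr k)) := by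
  rw [Finset.sum_filter, Fin.sum_univ_add]
  simp [fun i : Fin n => not_le.mpr i.isLt]

/-- under the hypotheses of the MTLS theorem, the minimum of
`‖[Ẽ_b, G̃]‖_F` over all `(X, Ẽ_b, G̃)` with `C_a X_a + (C_b + Ẽ_b) X_b = D + G̃`
equals `(σ_{n₂+1}² + … + σ_{n₂+d}²)^{1/2}`. -/
theorem mtls_min_value {M n₁ n₂ d : ℕ} (hd : 0 < d)
    (hM : n₁ + n₂ + d ≤ M)
    (Ca : Matrix (Fin M) (Fin n₁) ℝ) (Cb : Matrix (Fin M) (Fin n₂) ℝ)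
    (D : Matrix (Fin M) (Fin d) ℝ)
    (Q : Matrix (Fin M) (Fin n₁ ⊕ Fin (M - n₁)) ℝ)
    (hQ : Qᵀ * Q = 1) (hQ' : Q * Qᵀ = 1)
    (R₁₁ : Matrix (Fin n₁) (Fin n₁) ℝ) (R₁₂ : Matrix (Fin n₁) (Fin n₂) ℝ)
    (R₁d : Matrix (Fin n₁) (Fin d) ℝ)
    (R₂₂ : Matrix (Fin (M - n₁)) (Fin n₂) ℝ) (R₂d : Matrix (Fin (M - n₁)) (Fin d) ℝ)
    (hR₁₁ : IsUnit R₁₁.det)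
    (hQR : Qᵀ * fromCols (fromCols Ca Cb) D =
      fromBlocks (fromCols R₁₁ R₁₂) R₁d (fromCols 0 R₂₂) R₂d)
    (U : Matrix (Fin (M - n₁)) (Fin (M - n₁)) ℝ) (hU : Uᵀ * U = 1)
    (V₁₁ : Matrix (Fin n₂) (Fin n₂) ℝ) (V₁₂ : Matrix (Fin n₂) (Fin d) ℝ)
    (V₂₁ : Matrix (Fin d) (Fin n₂) ℝ) (V₂₂ : Matrix (Fin d) (Fin d) ℝ)
    (hV : (fromBlocks V₁₁ V₁₂ V₂₁ V₂₂)ᵀ * fromBlocks V₁₁ V₁₂ V₂₁ V₂₂ = 1)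
    (σ : Fin (n₂ + d) → ℝ) (hσpos : ∀ i, 0 < σ i) (hσdec : Antitone σ)
    (hSVD : fromCols R₂₂ R₂d =
      U * (Matrix.of fun (i : Fin (M - n₁)) (j : Fin n₂ ⊕ Fin d) =>
            if (i : ℕ) = ((finSumFinEquiv j : Fin (n₂ + d)) : ℕ)
            then σ (finSumFinEquiv j) else 0) *
        (fromBlocks V₁₁ V₁₂ V₂₁ V₂₂)ᵀ)
    (hV₂₂ : IsUnit V₂₂.det) :
    IsLeast
      {r : ℝ | ∃ (X : Matrix (Fin n₁ ⊕ Fin n₂) (Fin d) ℝ)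
        (E : Matrix (Fin M) (Fin n₂) ℝ) (G : Matrix (Fin M) (Fin d) ℝ),
        fromCols Ca (Cb + E) * X = D + G ∧ r = frob (fromCols E G)}
      (Real.sqrt (∑ i ∈ Finset.univ.filter (fun i : Fin (n₂ + d) => n₂ ≤ (i : ℕ)),
        σ i ^ 2)) := by
  classical
  set S : Matrix (Fin (M - n₁)) (Fin n₂ ⊕ Fin d) ℝ := of fun i j =>
    if (i : ℕ) = ((finSumFinEquiv j : Fin (n₂ + d)) : ℕ) then σ (finSumFinEquiv j) else 0
  set f : Fin n₂ ⊕ Fin d → ℝ := fun j => σ (finSumFinEquiv j) ^ 2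
  have hB : (U * S)ᵀ * (U * S) = diagonal f := by
    rw [transpose_mul, Matrix.mul_assoc, ← Matrix.mul_assoc Uᵀ, hU, Matrix.one_mul]
    exact transpose_mul_self_of_ite (Fin.val_injective.comp finSumFinEquiv.injective)
      (fun j => (finSumFinEquiv j).isLt.trans_le (by omega)) _
  set c := σ ⟨n₂, by omega⟩ ^ 2
  have hf₁ : ∀ i, c ≤ f (Sum.inl i) := fun i =>
    pow_le_pow_left₀ (hσpos _).le (hσdec (by simp [Fin.le_def])) 2
  have hf₂ : ∀ k, f (Sum.inr k) ≤ c := fun k =>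
    pow_le_pow_left₀ (hσpos _).le (hσdec (by simp [Fin.le_def])) 2
  obtain ⟨hCa, hCb, hD⟩ := mul_eq_fromRows_of_mul_eq_fromBlocks hQR
  rw [sum_filter_le_val_eq_sum_inr]
  constructor
  · obtain ⟨Y, Δ, hΔ, hval⟩ := exists_frobSq_eq_of_svd hV hSVD hB hV₂₂
    obtain ⟨X, E, G, h, hEG⟩ := exists_feasible_of_bottom hQ hQ' hR₁₁ hCa hCb hD hΔ
    exact ⟨X, E, G, h, by rw [frob_eq_sqrt_frobSq, hEG, hval]⟩
  · rintro _ ⟨X, E, G, h, rfl⟩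
    obtain ⟨Δ, hΔ, hle⟩ := exists_bottom_of_feasible hQ' hCa hCb hD h
    rw [frob_eq_sqrt_frobSq]
    exact Real.sqrt_le_sqrt
      ((sum_inr_le_frobSq_of_svd (mul_eq_one_comm.mp hV) hSVD hB hf₁ hf₂ hΔ).trans hle)
end

section
/- Under the hypotheses of the MTLS theorem — C_a ∈ ℝ^{M×n₁}, C_b ∈ ℝ^{M×n₂}, D ∈ ℝ^{M×d} with M ≥ n₁+n₂+d; Q = [Q₁, Q₂] orthogonal (Q₁ ∈ ℝ^{M×n₁}, Q₂ ∈ ℝ^{M×(M−n₁)}) with Qᵀ[C_a, C_b, D] = [[R₁₁, R₁₂, R₁d], [0, R₂₂, R₂d]] and R₁₁ ∈ ℝ^{n₁×n₁} invertible; [R₂₂, R₂d] = UΣVᵀ a singular value decomposition with singular values σ₁ ≥ … ≥ σ_{n₂+d} > 0, σ_{n₂} > σ_{n₂+1}, V = [[V₁₁, V₁₂], [V₂₁, V₂₂]] with V₂₂ ∈ ℝ^{d×d} invertible, and U₁ the first n₂ columns of U, Σ₁ = diag(σ₁, …, σ_{n₂}) — define R̃₂₂ = U₁Σ₁V₁₁ᵀ,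 R̃₂d = U₁Σ₁V₂₁ᵀ, C̃_b = Q₁R₁₂ + Q₂R̃₂₂, and D̃ = Q₁R₁d + Q₂R̃₂d. Then the corrected system is compatible with the MTLS solution: C_a X_a + C̃_b X_b = D̃, where X_b = −V₁₂V₂₂⁻¹ and X_a = R₁₁⁻¹(R₁d − R₁₂X_b); moreover the perturbation satisfies ‖[C̃_b − C_b, D̃ − D]‖_F = (σ_{n₂+1}² + … + σ_{n₂+d}²)^{1/2}. -/
open Matrix

/-! With `Q = [Q₁, Q₂]` and `QQᵀ = 1`, the QR relation reads `C_a = Q₁R₁₁`,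
`C_b = Q₁R₁₂ + Q₂R₂₂`, `D = Q₁R₁d + Q₂R₂d`, so the corrected data differ from the given ones
only by `Q₂ ([R̃₂₂, R̃₂d] - [R₂₂, R₂d])`.

Compatibility: orthogonality of the block columns of `V` gives `V₁₁ᵀV₁₂ = -V₂₁ᵀV₂₂`, i.e.
`V₁₁ᵀX_b = V₂₁ᵀ`, hence `R̃₂₂X_b = R̃₂d`; the choice of `X_a` absorbs the `Q₁`-component.

Perturbation: `UΣ = Uₑ diag(σ)` for the first `n₂ + d` columns `Uₑ` of `U`, and
`[R̃₂₂, R̃₂d] = Uₑ diag(σ₁, …, σ_{n₂}, 0, …, 0) Vᵀ` is the truncated SVD. The difference is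
`Uₑ diag(0, …, 0, σ_{n₂+1}, …) Vᵀ`, and the Frobenius norm ignores the factors `Q₂`, `Uₑ`
(orthonormal columns) and `Vᵀ`. -/

section Frobenius

variable {l m n o : Type*} [Fintype l] [Fintype m] [Fintype n] [Fintype o]

lemma frob_eq_sqrt_trace (A : Matrix m n ℝ) : frob A = Real.sqrt (Aᵀ * A).trace := by
  rw [frob, Finset.sum_comm]
  simp [trace, mul_apply, sq]

lemma frob_mul_of_transpose_mul_self_eq_one [DecidableEq n] {Q : Matrix m n ℝ}
    (hQ : Qᵀ * Q = 1) (A : Matrix n o ℝ) : frob (Q * A) = frob A := by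
  rw [frob_eq_sqrt_trace, frob_eq_sqrt_trace, transpose_mul, Matrix.mul_assoc,
    ← Matrix.mul_assoc Qᵀ, hQ, Matrix.one_mul]

lemma frob_mul_transpose_of_transpose_mul_self_eq_one [DecidableEq n] {V : Matrix o n ℝ}
    (hV : Vᵀ * V = 1) (A : Matrix m n ℝ) : frob (A * Vᵀ) = frob A := by
  rw [frob_eq_sqrt_trace, frob_eq_sqrt_trace, transpose_mul, transpose_transpose,
    Matrix.mul_assoc, trace_mul_comm, Matrix.mul_assoc, Matrix.mul_assoc, hV, Matrix.mul_one]

lemma frob_diagonal [DecidableEq n] (s : n → ℝ) :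
    frob (diagonal s) = Real.sqrt (∑ i, s i ^ 2) := by
  simp [frob, diagonal_apply, ite_pow]

lemma frob_mul_diagonal_truncate_sub [DecidableEq m] [DecidableEq n] {W : Matrix l (m ⊕ n) ℝ}
    (hW : Wᵀ * W = 1) {V : Matrix o (m ⊕ n) ℝ} (hV : Vᵀ * V = 1) (s₁ : m → ℝ) (s₂ : n → ℝ) :
    frob (W * diagonal (Sum.elim s₁ (0 : n → ℝ)) * Vᵀ - W * diagonal (Sum.elim s₁ s₂) * Vᵀ) =
      Real.sqrt (∑ j, s₂ j ^ 2) := by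
  rw [← Matrix.sub_mul, ← Matrix.mul_sub, diagonal_sub,
    frob_mul_transpose_of_transpose_mul_self_eq_one hV, frob_mul_of_transpose_mul_self_eq_one hW,
    frob_diagonal, Fintype.sum_sum_type]
  simp

end Frobenius

namespace Matrix

variable {l m n o p q : Type*}

lemma fromCols_add_fromCols_s13 (A A' : Matrix l m ℝ) (B B' : Matrix l n ℝ) :
    fromCols A B + fromCols A' B' = fromCols (A + A') (B + B') := by
  ext i (j | j) <;> rfl

lemma fromCols_sub_fromCols (A A' : Matrix l m ℝ) (B B' : Matrix l n ℝ) :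
    fromCols A B - fromCols A' B' = fromCols (A - A') (B - B') := by
  ext i (j | j) <;> rfl

lemma eq_mul_of_transpose_mul_eq [Fintype m] [Fintype n] [DecidableEq m] {Q : Matrix m n ℝ}
    (hQ : Q * Qᵀ = 1) {A : Matrix m o ℝ} {B : Matrix n o ℝ} (h : Qᵀ * A = B) : A = Q * B := by
  rw [← h, ← Matrix.mul_assoc, hQ, Matrix.one_mul]

lemma eq_of_transpose_mul_eq_fromBlocks [Fintype l] [Fintype m] [Fintype n] [DecidableEq l]
    {Q₁ : Matrix l m ℝ} {Q₂ : Matrix l n ℝ} (hQ : fromCols Q₁ Q₂ * (fromCols Q₁ Q₂)ᵀ = 1)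
    {Ca : Matrix l o ℝ} {Cb : Matrix l p ℝ} {D : Matrix l q ℝ}
    {R₁₁ : Matrix m o ℝ} {R₁₂ : Matrix m p ℝ} {R₁d : Matrix m q ℝ}
    {R₂₂ : Matrix n p ℝ} {R₂d : Matrix n q ℝ}
    (h : (fromCols Q₁ Q₂)ᵀ * fromCols (fromCols Ca Cb) D =
      fromBlocks (fromCols R₁₁ R₁₂) R₁d (fromCols 0 R₂₂) R₂d) :
    Ca = Q₁ * R₁₁ ∧ Cb = Q₁ * R₁₂ + Q₂ * R₂₂ ∧ D = Q₁ * R₁d + Q₂ * R₂d := by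
  have h' := eq_mul_of_transpose_mul_eq hQ h
  rw [fromCols_mul_fromBlocks, mul_fromCols, mul_fromCols, Matrix.mul_zero,
    fromCols_add_fromCols_s13, add_zero] at h'
  obtain ⟨hC, hD⟩ := fromCols_inj h'
  obtain ⟨hCa, hCb⟩ := fromCols_inj hC
  exact ⟨hCa, hCb, hD⟩

lemma transpose_mul_self_eq_one_of_fromCols [Fintype l] [DecidableEq m] [DecidableEq n]
    {A : Matrix l m ℝ} {B : Matrix l n ℝ} (h : (fromCols A B)ᵀ * fromCols A B = 1) :
    Bᵀ * B = 1 := by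
  rw [transpose_fromCols, fromRows_mul_fromCols, ← fromBlocks_one] at h
  exact (fromBlocks_inj.mp h).2.2.2

lemma submatrix_id_transpose_mul_self_eq_one [Fintype l] [DecidableEq m] [DecidableEq n]
    {U : Matrix l m ℝ} (hU : Uᵀ * U = 1) {e : n → m} (he : Function.Injective e) :
    (U.submatrix id e)ᵀ * U.submatrix id e = 1 := by
  rw [transpose_submatrix, ← submatrix_mul _ _ _ _ _ Function.bijective_id, hU,
    submatrix_one _ he]

lemma transpose_mul_neg_mul_inv_of_fromBlocks [Fintype m] [Fintype n] [DecidableEq m]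
    [DecidableEq n] {V₁₁ : Matrix m m ℝ} {V₁₂ : Matrix m n ℝ} {V₂₁ : Matrix n m ℝ}
    {V₂₂ : Matrix n n ℝ} (hV : (fromBlocks V₁₁ V₁₂ V₂₁ V₂₂)ᵀ * fromBlocks V₁₁ V₁₂ V₂₁ V₂₂ = 1)
    (hV₂₂ : IsUnit V₂₂.det) : V₁₁ᵀ * -(V₁₂ * V₂₂⁻¹) = V₂₁ᵀ := by
  rw [fromBlocks_transpose, fromBlocks_multiply, ← fromBlocks_one] at hV
  have hperp : V₁₁ᵀ * V₁₂ = -(V₂₁ᵀ * V₂₂) :=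
    eq_neg_of_add_eq_zero_left (fromBlocks_inj.mp hV).2.1
  rw [Matrix.mul_neg, ← Matrix.mul_assoc, hperp, Matrix.neg_mul, neg_neg, Matrix.mul_assoc,
    mul_nonsing_inv _ hV₂₂, Matrix.mul_one]

lemma fromCols_mul_diagonal_mul_fromBlocks_transpose [Fintype m] [Fintype n] [DecidableEq m]
    [DecidableEq n] (A : Matrix l m ℝ) (B : Matrix l n ℝ) (s : m → ℝ)
    (V₁₁ : Matrix m m ℝ) (V₁₂ : Matrix m n ℝ) (V₂₁ : Matrix n m ℝ) (V₂₂ : Matrix n n ℝ) :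
    fromCols A B * diagonal (Sum.elim s (0 : n → ℝ)) * (fromBlocks V₁₁ V₁₂ V₂₁ V₂₂)ᵀ =
      fromCols (A * diagonal s * V₁₁ᵀ) (A * diagonal s * V₂₁ᵀ) := by
  rw [← fromBlocks_diagonal, Pi.zero_def, diagonal_zero, fromCols_mul_fromBlocks,
    fromBlocks_transpose, fromCols_mul_fromBlocks]
  simp

end Matrix

lemma Fin.sum_filter_le_eq_sum_natAdd {β : Type*} [AddCommMonoid β] {a b : ℕ}
    (f : Fin (a + b) → β) :
    ∑ i ∈ Finset.univ.filter (fun i : Fin (a + b) => a ≤ (i : ℕ)), f i =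
      ∑ j : Fin b, f (Fin.natAdd a j) := by
  rw [Finset.sum_filter, Fin.sum_univ_add,
    Finset.sum_eq_zero fun i _ => if_neg (Nat.not_le.mpr i.is_lt), zero_add]
  simp

lemma frob_truncatedSVD_sub {k n₂ d : ℕ} (h : n₂ + d ≤ k) {U : Matrix (Fin k) (Fin k) ℝ}
    (hU : Uᵀ * U = 1) {V₁₁ : Matrix (Fin n₂) (Fin n₂) ℝ} {V₁₂ : Matrix (Fin n₂) (Fin d) ℝ}
    {V₂₁ : Matrix (Fin d) (Fin n₂) ℝ} {V₂₂ : Matrix (Fin d) (Fin d) ℝ}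
    (hV : (fromBlocks V₁₁ V₁₂ V₂₁ V₂₂)ᵀ * fromBlocks V₁₁ V₁₂ V₂₁ V₂₂ = 1)
    (σ : Fin (n₂ + d) → ℝ) :
    frob (fromCols
        (U.submatrix id (Fin.castLE (by omega : n₂ ≤ k)) * diagonal (σ ∘ Fin.castAdd d) * V₁₁ᵀ)
        (U.submatrix id (Fin.castLE (by omega : n₂ ≤ k)) * diagonal (σ ∘ Fin.castAdd d) * V₂₁ᵀ) -
      U * (of fun (i : Fin k) (j : Fin n₂ ⊕ Fin d) =>
            if (i : ℕ) = ((finSumFinEquiv j : Fin (n₂ + d)) : ℕ)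
            then σ (finSumFinEquiv j) else 0) * (fromBlocks V₁₁ V₁₂ V₂₁ V₂₂)ᵀ) =
      Real.sqrt (∑ j : Fin d, σ (Fin.natAdd n₂ j) ^ 2) := by
  set e : Fin n₂ ⊕ Fin d → Fin k := Fin.castLE h ∘ finSumFinEquiv
  have he : Function.Injective e := (Fin.castLE_injective _).comp finSumFinEquiv.injective
  have hSigma : U * (of fun (i : Fin k) (j : Fin n₂ ⊕ Fin d) =>
      if (i : ℕ) = ((finSumFinEquiv j : Fin (n₂ + d)) : ℕ) then σ (finSumFinEquiv j) else 0) =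
      U.submatrix id e * diagonal (Sum.elim (σ ∘ Fin.castAdd d) (σ ∘ Fin.natAdd n₂)) := by
    rw [← show U * (1 : Matrix (Fin k) (Fin k) ℝ).submatrix id e = U.submatrix id e from
      mul_submatrix_one (Equiv.refl _) e U, Matrix.mul_assoc]
    congr 1
    ext i (j | j) <;> simp [e, one_apply, Fin.ext_iff] <;> congr
  have hU₁ : fromCols (U.submatrix id (Fin.castLE (by omega : n₂ ≤ k)))
      (U.submatrix id (e ∘ Sum.inr)) = U.submatrix id e := by
    ext i (j | j) <;> rfl
  rw [hSigma, ← fromCols_mul_diagonal_mul_fromBlocks_transpose _ (U.submatrix id (e ∘ Sum.inr))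
    _ V₁₁ V₁₂ V₂₁ V₂₂, hU₁]
  exact frob_mul_diagonal_truncate_sub (submatrix_id_transpose_mul_self_eq_one hU he) hV _ _

/-- under the hypotheses of the MTLS theorem, with `Q = [Q₁, Q₂]`,
`U₁` the first `n₂` columns of `U`, `S₁ = diag(σ₁, …, σ_{n₂})`, `R̃₂₂ = U₁S₁V₁₁ᵀ`,
`R̃₂d = U₁S₁V₂₁ᵀ`, `C̃_b = Q₁R₁₂ + Q₂R̃₂₂` and `D̃ = Q₁R₁d + Q₂R̃₂d`, the corrected
system is compatible with the MTLS solution: `C_a X_a + C̃_b X_b = D̃` for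
`X_b = −V₁₂V₂₂⁻¹`, `X_a = R₁₁⁻¹(R₁d − R₁₂X_b)`, and the perturbation satisfies
`‖[C̃_b − C_b, D̃ − D]‖_F = (σ_{n₂+1}² + … + σ_{n₂+d}²)^{1/2}`. -/
theorem mtls_corrected_system {M n₁ n₂ d : ℕ}
    (hM : n₁ + n₂ + d ≤ M)
    (Ca : Matrix (Fin M) (Fin n₁) ℝ) (Cb : Matrix (Fin M) (Fin n₂) ℝ)
    (D : Matrix (Fin M) (Fin d) ℝ)
    (Q : Matrix (Fin M) (Fin n₁ ⊕ Fin (M - n₁)) ℝ)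
    (hQ : Qᵀ * Q = 1) (hQ' : Q * Qᵀ = 1)
    (R₁₁ : Matrix (Fin n₁) (Fin n₁) ℝ) (R₁₂ : Matrix (Fin n₁) (Fin n₂) ℝ)
    (R₁d : Matrix (Fin n₁) (Fin d) ℝ)
    (R₂₂ : Matrix (Fin (M - n₁)) (Fin n₂) ℝ) (R₂d : Matrix (Fin (M - n₁)) (Fin d) ℝ)
    (hR₁₁ : IsUnit R₁₁.det)
    (hQR : Qᵀ * fromCols (fromCols Ca Cb) D =
      fromBlocks (fromCols R₁₁ R₁₂) R₁d (fromCols 0 R₂₂) R₂d)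
    (U : Matrix (Fin (M - n₁)) (Fin (M - n₁)) ℝ) (hU : Uᵀ * U = 1)
    (V₁₁ : Matrix (Fin n₂) (Fin n₂) ℝ) (V₁₂ : Matrix (Fin n₂) (Fin d) ℝ)
    (V₂₁ : Matrix (Fin d) (Fin n₂) ℝ) (V₂₂ : Matrix (Fin d) (Fin d) ℝ)
    (hV : (fromBlocks V₁₁ V₁₂ V₂₁ V₂₂)ᵀ * fromBlocks V₁₁ V₁₂ V₂₁ V₂₂ = 1)
    (σ : Fin (n₂ + d) → ℝ)
    (hSVD : fromCols R₂₂ R₂d =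
      U * (Matrix.of fun (i : Fin (M - n₁)) (j : Fin n₂ ⊕ Fin d) =>
            if (i : ℕ) = ((finSumFinEquiv j : Fin (n₂ + d)) : ℕ)
            then σ (finSumFinEquiv j) else 0) *
        (fromBlocks V₁₁ V₁₂ V₂₁ V₂₂)ᵀ)
    (hV₂₂ : IsUnit V₂₂.det) :
    let Q₁ : Matrix (Fin M) (Fin n₁) ℝ := Matrix.of fun i j => Q i (Sum.inl j)
    let Q₂ : Matrix (Fin M) (Fin (M - n₁)) ℝ := Matrix.of fun i j => Q i (Sum.inr j)
    let U₁ : Matrix (Fin (M - n₁)) (Fin n₂) ℝ :=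
      Matrix.of fun i (j : Fin n₂) => U i ⟨(j : ℕ), by omega⟩
    let S₁ : Matrix (Fin n₂) (Fin n₂) ℝ :=
      Matrix.diagonal fun j : Fin n₂ => σ ⟨(j : ℕ), by omega⟩
    let Rt₂₂ : Matrix (Fin (M - n₁)) (Fin n₂) ℝ := U₁ * S₁ * V₁₁ᵀ
    let Rt₂d : Matrix (Fin (M - n₁)) (Fin d) ℝ := U₁ * S₁ * V₂₁ᵀ
    let Ctb : Matrix (Fin M) (Fin n₂) ℝ := Q₁ * R₁₂ + Q₂ * Rt₂₂
    let Dt : Matrix (Fin M) (Fin d) ℝ := Q₁ * R₁d + Q₂ * Rt₂d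
    let Xb : Matrix (Fin n₂) (Fin d) ℝ := -(V₁₂ * V₂₂⁻¹)
    let Xa : Matrix (Fin n₁) (Fin d) ℝ := R₁₁⁻¹ * (R₁d - R₁₂ * Xb)
    Ca * Xa + Ctb * Xb = Dt ∧
    frob (fromCols (Ctb - Cb) (Dt - D)) =
      Real.sqrt (∑ i ∈ Finset.univ.filter (fun i : Fin (n₂ + d) => n₂ ≤ (i : ℕ)),
        σ i ^ 2) := by
  intro Q₁ Q₂ U₁ S₁ Rt₂₂ Rt₂d Ctb Dt Xb Xa
  have hQ₁₂ : Q = fromCols Q₁ Q₂ := (fromCols_toCols Q).symm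
  rw [hQ₁₂] at hQ hQ' hQR
  obtain ⟨hCa, hCb, hD⟩ := eq_of_transpose_mul_eq_fromBlocks hQ' hQR
  have hXb : V₁₁ᵀ * Xb = V₂₁ᵀ := transpose_mul_neg_mul_inv_of_fromBlocks hV hV₂₂
  refine ⟨?compatible, ?residual⟩
  case compatible =>
    calc Ca * Xa + Ctb * Xb
        = Q₁ * (R₁₁ * R₁₁⁻¹) * (R₁d - R₁₂ * Xb) +
            (Q₁ * R₁₂ * Xb + Q₂ * (U₁ * S₁) * (V₁₁ᵀ * Xb)) := by
          simp only [hCa, Ctb, Rt₂₂, Xa, Matrix.add_mul, Matrix.mul_assoc]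
      _ = Dt := by
          rw [mul_nonsing_inv _ hR₁₁, hXb, Matrix.mul_one, Matrix.mul_sub]
          simp only [Dt, Rt₂d, Matrix.mul_assoc]
          abel
  case residual =>
    have hres : fromCols (Ctb - Cb) (Dt - D) =
        Q₂ * (fromCols Rt₂₂ Rt₂d - fromCols R₂₂ R₂d) := by
      rw [fromCols_sub_fromCols, mul_fromCols, hCb, hD, Matrix.mul_sub, Matrix.mul_sub]
      congr 1
      · simp only [Ctb]; abel
      · simp only [Dt]; abel
    rw [hres, frob_mul_of_transpose_mul_self_eq_one (transpose_mul_self_eq_one_of_fromCols hQ),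
      hSVD, Fin.sum_filter_le_eq_sum_natAdd]
    exact frob_truncatedSVD_sub (by omega) hU hV σ
end

section
/- Let M ≥ n + d, C ∈ ℝ^{M×n}, D ∈ ℝ^{M×d}, and let [C, D] = UΣVᵀ be a singular value decomposition with singular values σ₁ ≥ … ≥ σ_{n+d} > 0 satisfying σ_n > σ_{n+1}, partition V = [[V₁₁, V₁₂], [V₂₁, V₂₂]] with V₁₁ ∈ ℝ^{n×n}, V₂₂ ∈ ℝ^{d×d} invertible, let U₁ be the first n columns of U and Σ₁ = diag(σ₁, …, σ_n). Define the corrected matrices C̃ = U₁Σ₁V₁₁ᵀ and D̃ = U₁Σ₁V₂₁ᵀ. Then the corrected system is compatible with the TLS solution: C̃ X = D̃ for X = −V₁₂V₂₂⁻¹, and the perturbation satisfies ‖[C̃ − C, D̃ − D]‖_F = (σ_{n+1}² + … + σ_{n+d}²)^{1/2}. -/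
/-!
Zeroing the trailing singular values gives `[C̃, D̃] = U [Σ₁, 0] Vᵀ`, hence
`[C̃ − C, D̃ − D] = U [0, −Σ₂] Vᵀ`, and since the Frobenius norm is invariant under the orthogonal
factors it equals that of the trailing block `Σ₂`. Compatibility is the off-diagonal block of
`VᵀV = I`: `V₁₁ᵀV₁₂ + V₂₁ᵀV₂₂ = 0`, so `V₁₁ᵀ(−V₁₂V₂₂⁻¹) = V₂₁ᵀ`.
-/

open Matrix

/-- `X` is a real TLS solution for data `C, D`: there exist perturbations `Ẽ, G̃` with
`(C + Ẽ) X = D + G̃` attaining the minimum of `‖[Ẽ, G̃]‖_F` among all feasible triples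
`(X', Ẽ', G̃')`. -/
def IsTLSSol {M n d : ℕ}
    (C : Matrix (Fin M) (Fin n) ℝ) (D : Matrix (Fin M) (Fin d) ℝ)
    (X : Matrix (Fin n) (Fin d) ℝ) : Prop :=
  ∃ (E : Matrix (Fin M) (Fin n) ℝ) (G : Matrix (Fin M) (Fin d) ℝ),
    (C + E) * X = D + G ∧
    ∀ (E' : Matrix (Fin M) (Fin n) ℝ) (G' : Matrix (Fin M) (Fin d) ℝ)
      (X' : Matrix (Fin n) (Fin d) ℝ),
      (C + E') * X' = D + G' → frob (fromCols E G) ≤ frob (fromCols E' G')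

section Frobenius

variable {m p : Type*} [Fintype m] [Fintype p]

lemma sum_sq_eq_trace_transpose_mul_self (A : Matrix m p ℝ) :
    ∑ i, ∑ j, A i j ^ 2 = (Aᵀ * A).trace := by
  rw [Finset.sum_comm]
  simp [Matrix.trace, Matrix.mul_apply, sq]

lemma frob_mul_mul_transpose_of_orthonormal {q r : Type*} [Fintype q] [Fintype r]
    [DecidableEq m] [DecidableEq p] {U : Matrix q m ℝ} (hU : Uᵀ * U = 1)
    {V : Matrix r p ℝ} (hV : Vᵀ * V = 1) (B : Matrix m p ℝ) :
    frob (U * B * Vᵀ) = frob B := by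
  have hsq : (U * B * Vᵀ)ᵀ * (U * B * Vᵀ) = V * (Bᵀ * (Uᵀ * U) * B) * Vᵀ := by
    simp only [transpose_mul, transpose_transpose, Matrix.mul_assoc]
  rw [frob, frob, sum_sq_eq_trace_transpose_mul_self, sum_sq_eq_trace_transpose_mul_self, hsq,
    hU, Matrix.mul_one, trace_mul_comm, ← Matrix.mul_assoc, hV, Matrix.one_mul]

lemma frob_neg (A : Matrix m p ℝ) : frob (-A) = frob A := by
  simp [frob]

lemma frob_fromCols_zero_left {p' : Type*} [Fintype p'] (B : Matrix m p' ℝ) :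
    frob (fromCols (0 : Matrix m p ℝ) B) = frob B := by
  simp [frob, Fintype.sum_sum_type]

end Frobenius

lemma fromCols_sub_fromCols {R m p₁ p₂ : Type*} [Sub R] (A₁ B₁ : Matrix m p₁ R)
    (A₂ B₂ : Matrix m p₂ R) :
    fromCols A₁ A₂ - fromCols B₁ B₂ = fromCols (A₁ - B₁) (A₂ - B₂) := by
  ext i (j | j) <;> rfl

lemma transpose_mul_add_transpose_mul_eq_zero_of_fromBlocks {R k l a b : Type*} [CommRing R]
    [Fintype k] [Fintype l] [DecidableEq a] [DecidableEq b]
    {A : Matrix k a R} {B : Matrix k b R} {C : Matrix l a R} {D : Matrix l b R}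
    (h : (fromBlocks A B C D)ᵀ * fromBlocks A B C D = 1) : Aᵀ * B + Cᵀ * D = 0 := by
  rw [fromBlocks_transpose, fromBlocks_multiply, ← fromBlocks_one, fromBlocks_inj] at h
  exact h.2.1

lemma mul_neg_mul_inv_eq_of_add_eq_zero {R a k b : Type*} [CommRing R] [Fintype k] [Fintype b]
    [DecidableEq b] {P : Matrix a k R} {B : Matrix k b R} {Q : Matrix a b R} {D : Matrix b b R}
    (h : P * B + Q * D = 0) (hD : IsUnit D.det) : P * -(B * D⁻¹) = Q := by
  rw [Matrix.mul_neg, ← Matrix.mul_assoc, eq_neg_of_add_eq_zero_left h, Matrix.neg_mul, neg_neg,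
    Matrix.mul_assoc, Matrix.mul_nonsing_inv D hD, Matrix.mul_one]

def rectDiagonal {R m p : Type*} [Zero R] [DecidableEq m] (e : p → m) (s : p → R) :
    Matrix m p R :=
  of fun i j => if i = e j then s j else 0

section RectDiagonal

variable {R m p₁ p₂ : Type*} [DecidableEq m]

lemma rectDiagonal_sum [Zero R] (e : p₁ ⊕ p₂ → m) (s : p₁ ⊕ p₂ → R) :
    rectDiagonal e s =
      fromCols (rectDiagonal (e ∘ Sum.inl) (s ∘ Sum.inl))
        (rectDiagonal (e ∘ Sum.inr) (s ∘ Sum.inr)) := by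
  ext i (j | j) <;> rfl

lemma mul_rectDiagonal {l p : Type*} [Fintype m] [Fintype p] [DecidableEq p] [Semiring R]
    (U : Matrix l m R) (e : p → m) (s : p → R) : U * rectDiagonal e s = U.submatrix id e * diagonal s := by
  ext i j
  rw [mul_diagonal]
  simp [rectDiagonal, mul_apply]

lemma frob_rectDiagonal {p : Type*} [Fintype m] [Fintype p] (e : p → m) (s : p → ℝ) :
    frob (rectDiagonal e s) = Real.sqrt (∑ j, s j ^ 2) := by
  rw [frob, Finset.sum_comm]
  simp [rectDiagonal, ite_pow]

end RectDiagonal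

lemma Fin.sum_filter_le_val {β : Type*} [AddCommMonoid β] {n d : ℕ} (f : Fin (n + d) → β) :
    ∑ i ∈ Finset.univ.filter (fun i : Fin (n + d) => n ≤ (i : ℕ)), f i =
      ∑ j : Fin d, f (Fin.natAdd n j) := by
  have h_lt (j : Fin n) : ¬ n ≤ (j : ℕ) := not_le.mpr j.isLt
  simp [Finset.sum_filter, Fin.sum_univ_add, h_lt]

/-- under the hypotheses of the TLS theorem, with `U₁` the first `n`
columns of `U` and `S₁ = diag(σ₁, …, σ_n)`, the corrected matrices `C̃ = U₁S₁V₁₁ᵀ` and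
`D̃ = U₁S₁V₂₁ᵀ` satisfy `C̃ X = D̃` for the TLS solution `X = −V₁₂V₂₂⁻¹`, and the
perturbation satisfies `‖[C̃ − C, D̃ − D]‖_F = (σ_{n+1}² + … + σ_{n+d}²)^{1/2}`. -/
theorem tls_corrected_system {M n d : ℕ} (hM : n + d ≤ M)
    (C : Matrix (Fin M) (Fin n) ℝ) (D : Matrix (Fin M) (Fin d) ℝ)
    (U : Matrix (Fin M) (Fin M) ℝ) (hU : Uᵀ * U = 1)
    (V₁₁ : Matrix (Fin n) (Fin n) ℝ) (V₁₂ : Matrix (Fin n) (Fin d) ℝ)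
    (V₂₁ : Matrix (Fin d) (Fin n) ℝ) (V₂₂ : Matrix (Fin d) (Fin d) ℝ)
    (hV : (fromBlocks V₁₁ V₁₂ V₂₁ V₂₂)ᵀ * fromBlocks V₁₁ V₁₂ V₂₁ V₂₂ = 1)
    (σ : Fin (n + d) → ℝ)
    (hSVD : fromCols C D =
      U * (Matrix.of fun (i : Fin M) (j : Fin n ⊕ Fin d) =>
            if (i : ℕ) = ((finSumFinEquiv j : Fin (n + d)) : ℕ)
            then σ (finSumFinEquiv j) else 0) *
        (fromBlocks V₁₁ V₁₂ V₂₁ V₂₂)ᵀ)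
    (hV₂₂ : IsUnit V₂₂.det) :
    let U₁ : Matrix (Fin M) (Fin n) ℝ :=
      Matrix.of fun i (j : Fin n) => U i ⟨(j : ℕ), by omega⟩
    let S₁ : Matrix (Fin n) (Fin n) ℝ :=
      Matrix.diagonal fun j : Fin n => σ ⟨(j : ℕ), by omega⟩
    let Ct : Matrix (Fin M) (Fin n) ℝ := U₁ * S₁ * V₁₁ᵀ
    let Dt : Matrix (Fin M) (Fin d) ℝ := U₁ * S₁ * V₂₁ᵀ
    Ct * (-(V₁₂ * V₂₂⁻¹)) = Dt ∧
    frob (fromCols (Ct - C) (Dt - D)) =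
      Real.sqrt (∑ i ∈ Finset.univ.filter (fun i : Fin (n + d) => n ≤ (i : ℕ)),
        σ i ^ 2) := by
  intro U₁ S₁ Ct Dt
  set e : Fin n ⊕ Fin d → Fin M := fun j => Fin.castLE hM (finSumFinEquiv j)
  set s : Fin n ⊕ Fin d → ℝ := fun j => σ (finSumFinEquiv j)
  have hdiag : (Matrix.of fun (i : Fin M) (j : Fin n ⊕ Fin d) =>
      if (i : ℕ) = ((finSumFinEquiv j : Fin (n + d)) : ℕ) then σ (finSumFinEquiv j) else 0) =
      rectDiagonal e s := by
    ext i j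
    simp [rectDiagonal, e, s, Fin.ext_iff]
  rw [hdiag, rectDiagonal_sum] at hSVD
  have hU₁S₁ : U * rectDiagonal (e ∘ Sum.inl) (s ∘ Sum.inl) = U₁ * S₁ := by
    rw [mul_rectDiagonal]
    rfl
  -- Without the ascription the zero block's type is found late and `*` elaborates to
  -- `CStarMatrix` multiplication, which the `Matrix` rewriting lemmas do not match.
  have hCtDt : fromCols Ct Dt =
      U * fromCols (rectDiagonal (e ∘ Sum.inl) (s ∘ Sum.inl)) (0 : Matrix (Fin M) (Fin d) ℝ) *
        (fromBlocks V₁₁ V₁₂ V₂₁ V₂₂)ᵀ := by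
    rw [mul_fromCols, hU₁S₁, Matrix.mul_zero, fromBlocks_transpose, fromCols_mul_fromBlocks]
    simp [Ct, Dt]
  refine ⟨?_, ?_⟩
  · rw [Matrix.mul_assoc, mul_neg_mul_inv_eq_of_add_eq_zero
      (transpose_mul_add_transpose_mul_eq_zero_of_fromBlocks hV) hV₂₂]
  · have hdiff : fromCols (Ct - C) (Dt - D) =
        U * fromCols (0 : Matrix (Fin M) (Fin n) ℝ) (-rectDiagonal (e ∘ Sum.inr) (s ∘ Sum.inr)) *
          (fromBlocks V₁₁ V₁₂ V₂₁ V₂₂)ᵀ := by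
      rw [← fromCols_sub_fromCols, hCtDt, hSVD, ← Matrix.sub_mul, ← Matrix.mul_sub,
        fromCols_sub_fromCols, sub_self, zero_sub]
    rw [hdiff, frob_mul_mul_transpose_of_orthonormal hU hV, frob_fromCols_zero_left, frob_neg,
      frob_rectDiagonal, Fin.sum_filter_le_val]
    rfl
end
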